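/- Let μ,ν>0 with Sc = ν/μ ≥ 16, let ε>0, and define κ_ε=(ε/ν³)^{1/4} and κ'_β=(ε/(νμ²))^{1/4}, so κ'_β = Sc^{1/2}·κ_ε. Let t be a tracer spectrum (3D framework) with shell sums 𝐭, dissipation rate χ and wavenumber κ_θ. Let κ0 ≤ κg with 4κg ≤ κ_ε, and fix constants c1,…,c5>0. Assume: (i) for every κ∈[κg,κ_ε], c1·χ·ε^{-1/3}·κ^{-2/3} ≤ 𝐭_{κ,2κ} ≤ c2·χ·ε^{-1/3}·κ^{-2/3}; (ii) for every κ∈[κ_ε,κ'_β], c3·χ·(ν/ε)^{1/2} ≤ 𝐭_{κ,2κ} ≤ c4·χ·(ν/ε)^{1/2}; (iii) 𝐭_{κ0,∞} ≤ c5·𝐭_{κg,κ'_β}. Then there exist constants c,C>0 depending only on c1,…,c5 such that c ≤ κ_θ²·(a+b) ≤ C, where a = (κ'_β)^{-4/3}·Sc^{-1/3}·(κg^{-2/3} − κ_ε^{-2/3}) and b = (κ'_β)^{-2}·ln Sc. (Theorem 6.1, first part, of the paper.) -/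

import Mathlib

open Real

/-- Euclidean norm of a lattice vector `k ∈ ℤ^d`. -/
noncomputable def knorm {d : ℕ} (k : Fin d → ℤ) : ℝ :=
  Real.sqrt (∑ i, ((k i : ℝ)) ^ 2)

/-- Shell sum `𝐭_{κ1,κ2}` (finite upper end). -/
noncomputable def shellSum (d : ℕ) (L κ0 : ℝ) (t : (Fin d → ℤ) → ℝ) (κ1 κ2 : ℝ) : ℝ :=
  L ^ (-(d : ℤ)) * ∑' k : Fin d → ℤ,
    (if κ1 ≤ κ0 * knorm k ∧ κ0 * knorm k < κ2 then t k else 0)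

/-- Shell sum `𝐭_{κ1,∞}`. -/
noncomputable def shellSumTop (d : ℕ) (L κ0 : ℝ) (t : (Fin d → ℤ) → ℝ) (κ1 : ℝ) : ℝ :=
  L ^ (-(d : ℤ)) * ∑' k : Fin d → ℤ, (if κ1 ≤ κ0 * knorm k then t k else 0)

/-- Tracer dissipation rate `χ = μ L^{-d} κ0² Σ_k |k|² t(k)`. -/
noncomputable def chiRate (d : ℕ) (L κ0 μ : ℝ) (t : (Fin d → ℤ) → ℝ) : ℝ :=
  μ * L ^ (-(d : ℤ)) * κ0 ^ 2 * ∑' k : Fin d → ℤ, knorm k ^ 2 * t k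

/-- Indicator wavenumber squared, `κ_θ² = κ0² Σ|k|²t(k) / Σ t(k)`. -/
noncomputable def kThetaSq (d : ℕ) (κ0 : ℝ) (t : (Fin d → ℤ) → ℝ) : ℝ :=
  κ0 ^ 2 * (∑' k : Fin d → ℤ, knorm k ^ 2 * t k) / (∑' k : Fin d → ℤ, t k)

/-- A (discrete) tracer spectrum: nonnegative, vanishing at `k = 0`, not identically
zero, and with `Σ (1+|k|²) t(k) < ∞`. -/
structure IsTracerSpectrum (d : ℕ) (t : (Fin d → ℤ) → ℝ) : Prop where
  nonneg : ∀ k, 0 ≤ t k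
  map_zero : t 0 = 0
  exists_ne_zero : ∃ k, t k ≠ 0
  summable : Summable fun k : Fin d → ℤ => (1 + knorm k ^ 2) * t k

/-!
By `κ_θ² = χ / (μ 𝐭_{κ0,∞})` and the scaling identities for `κ'_β`, the quantity
`κ_θ² (a + b)` equals `χ (ε^{-1/3} (κg^{-2/3} - κε^{-2/3}) + (ν/ε)^{1/2} ln Sc) / 𝐭_{κ0,∞}`, and by
(iii) the denominator is comparable to `𝐭_{κg,κ'_β} = 𝐭_{κg,κε} + 𝐭_{κε,κ'_β}`. Cut both ranges into
dyadic shells. In the inertial range the shells decay geometrically like `κ^{-2/3}`, so their sum is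
comparable to the first one, i.e. to `κg^{-2/3}`, and hence to `κg^{-2/3} - κε^{-2/3}` as
`4 κg ≤ κε`. In the viscous-convective range the shells have constant size and there are
`≍ log₂ (κ'_β / κε) = log₂ Sc / 2` of them, which is `≍ ln Sc` once `Sc ≥ 16`.
-/

lemma one_le_knorm {d : ℕ} {k : Fin d → ℤ} (hk : k ≠ 0) : 1 ≤ knorm k := by
  obtain ⟨i, hi⟩ : ∃ i, k i ≠ 0 := Function.ne_iff.mp hk
  have hi' : (1 : ℝ) ≤ (k i : ℝ) ^ 2 := by
    rw [← sq_abs]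
    exact one_le_pow₀ (by exact_mod_cast Int.one_le_abs hi)
  have hsum : (1 : ℝ) ≤ ∑ j, (k j : ℝ) ^ 2 :=
    hi'.trans (Finset.single_le_sum (fun j _ => sq_nonneg (k j : ℝ)) (Finset.mem_univ i))
  exact Real.one_le_sqrt.mpr hsum

namespace IsTracerSpectrum

variable {d : ℕ} {t : (Fin d → ℤ) → ℝ}

lemma summable' (h : IsTracerSpectrum d t) : Summable t :=
  Summable.of_nonneg_of_le h.nonneg
    (fun k => le_mul_of_one_le_left (h.nonneg k) (le_add_of_nonneg_right (sq_nonneg _)))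
    h.summable

lemma summable_knorm_sq_mul (h : IsTracerSpectrum d t) :
    Summable fun k => knorm k ^ 2 * t k :=
  Summable.of_nonneg_of_le (fun k => mul_nonneg (sq_nonneg _) (h.nonneg k))
    (fun k => mul_le_mul_of_nonneg_right (le_add_of_nonneg_left zero_le_one) (h.nonneg k))
    h.summable

lemma summable_ite (h : IsTracerSpectrum d t) (P : (Fin d → ℤ) → Prop) [DecidablePred P] :
    Summable fun k => if P k then t k else 0 :=
  Summable.of_nonneg_of_le (fun k => by split_ifs <;> first | exact h.nonneg k | exact le_rfl)
    (fun k => by split_ifs <;> first | exact h.nonneg k | exact le_rfl) h.summable'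

lemma tsum_knorm_sq_mul_pos (h : IsTracerSpectrum d t) :
    0 < ∑' k, knorm k ^ 2 * t k := by
  obtain ⟨k₀, hk₀⟩ := h.exists_ne_zero
  have hk₀0 : k₀ ≠ 0 := by rintro rfl; exact hk₀ h.map_zero
  have hpos : 0 < knorm k₀ ^ 2 * t k₀ :=
    mul_pos (pow_pos (one_pos.trans_le (one_le_knorm hk₀0)) 2)
      ((h.nonneg k₀).lt_of_ne' hk₀)
  exact hpos.trans_le <| h.summable_knorm_sq_mul.le_tsum k₀
    fun k _ => mul_nonneg (sq_nonneg _) (h.nonneg k)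

end IsTracerSpectrum

section Shells

variable {d : ℕ} {L κ0 : ℝ} {t : (Fin d → ℤ) → ℝ}

lemma shellSum_mono (hL : 0 ≤ L) (h : IsTracerSpectrum d t) {κ1 κ2 κ1' κ2' : ℝ}
    (h1 : κ1' ≤ κ1) (h2 : κ2 ≤ κ2') :
    shellSum d L κ0 t κ1 κ2 ≤ shellSum d L κ0 t κ1' κ2' := by
  refine mul_le_mul_of_nonneg_left ?_ (by positivity)
  refine (h.summable_ite _).tsum_le_tsum (fun k => ?_) (h.summable_ite _)
  split_ifs with hk hk'
  · exact le_rfl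
  · exact absurd ⟨h1.trans hk.1, hk.2.trans_le h2⟩ hk'
  · exact h.nonneg k
  · exact le_rfl

lemma shellSum_add (h : IsTracerSpectrum d t) {κ1 κ2 κ3 : ℝ}
    (h12 : κ1 ≤ κ2) (h23 : κ2 ≤ κ3) :
    shellSum d L κ0 t κ1 κ3 = shellSum d L κ0 t κ1 κ2 + shellSum d L κ0 t κ2 κ3 := by
  unfold shellSum
  rw [← mul_add, ← (h.summable_ite _).tsum_add (h.summable_ite _)]
  congr 1
  refine tsum_congr fun k => ?_
  split_ifs <;> first | (exfalso; grind) | simp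

lemma shellSum_le_shellSumTop (hL : 0 ≤ L) (h : IsTracerSpectrum d t) {κ1 κ2 κ1' : ℝ}
    (h1 : κ1' ≤ κ1) :
    shellSum d L κ0 t κ1 κ2 ≤ shellSumTop d L κ0 t κ1' := by
  refine mul_le_mul_of_nonneg_left ?_ (by positivity)
  refine (h.summable_ite _).tsum_le_tsum (fun k => ?_) (h.summable_ite _)
  split_ifs with hk hk'
  · exact le_rfl
  · exact absurd (h1.trans hk.1) hk'
  · exact h.nonneg k
  · exact le_rfl

lemma shellSumTop_self (hκ0 : 0 < κ0) (h : IsTracerSpectrum d t) :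
    shellSumTop d L κ0 t κ0 = L ^ (-(d : ℤ)) * ∑' k, t k := by
  unfold shellSumTop
  congr 1
  refine tsum_congr fun k => ?_
  rcases eq_or_ne k 0 with rfl | hk
  · simp [h.map_zero]
  · rw [if_pos (le_mul_of_one_le_right hκ0.le (one_le_knorm hk))]

lemma shellSum_eq_sum_dyadic (h : IsTracerSpectrum d t) {κ : ℝ} (hκ : 0 ≤ κ)
    (N : ℕ) : shellSum d L κ0 t κ (2 ^ N * κ)
      = ∑ j ∈ Finset.range N, shellSum d L κ0 t (2 ^ j * κ) (2 * (2 ^ j * κ)) := by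
  induction N with
  | zero =>
    have hempty : ∀ k : Fin d → ℤ, ¬(κ ≤ κ0 * knorm k ∧ κ0 * knorm k < κ) :=
      fun k hk => hk.1.not_gt hk.2
    simp [shellSum, hempty]
  | succ n ih =>
    have hn : κ ≤ 2 ^ n * κ := le_mul_of_one_le_left hκ (one_le_pow₀ one_le_two)
    rw [pow_succ', mul_assoc, shellSum_add h hn (by linarith), ih, Finset.sum_range_succ]

end Shells

section DyadicShells

variable {d : ℕ} {L κ0 : ℝ} {t : (Fin d → ℤ) → ℝ}

lemma two_pow_mul_mem_Icc {κ κ' : ℝ} (hκ : 0 ≤ κ) {N j : ℕ} (hN : 2 ^ N * κ ≤ κ')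
    (hj : j ≤ N) :
    2 ^ j * κ ∈ Set.Icc κ κ' :=
  ⟨le_mul_of_one_le_left hκ (one_le_pow₀ one_le_two),
    (mul_le_mul_of_nonneg_right (pow_le_pow_right₀ one_le_two hj) hκ).trans hN⟩

lemma sum_dyadic_le_shellSum (hL : 0 ≤ L) (h : IsTracerSpectrum d t) {κ κ' : ℝ}
    (hκ : 0 ≤ κ) {N : ℕ} (hN : 2 ^ N * κ ≤ κ') :
    ∑ j ∈ Finset.range N, shellSum d L κ0 t (2 ^ j * κ) (2 * (2 ^ j * κ))
      ≤ shellSum d L κ0 t κ κ' := by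
  rw [← shellSum_eq_sum_dyadic h hκ]
  exact shellSum_mono hL h le_rfl hN

lemma shellSum_le_sum_dyadic (hL : 0 ≤ L) (h : IsTracerSpectrum d t) {κ κ' : ℝ}
    (hκ : 0 ≤ κ) {N : ℕ} (hN : κ' ≤ 2 ^ N * κ) :
    shellSum d L κ0 t κ κ'
      ≤ ∑ j ∈ Finset.range N, shellSum d L κ0 t (2 ^ j * κ) (2 * (2 ^ j * κ)) := by
  rw [← shellSum_eq_sum_dyadic h hκ]
  exact shellSum_mono hL h le_rfl hN

end DyadicShells

lemma exists_dyadic_count {x : ℝ} (hx : 2 ≤ x) :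
    ∃ N : ℕ, 2 ^ N ≤ x ∧ x ≤ 2 ^ (N + 1) ∧
      Real.log x / 2 ≤ N ∧ (N : ℝ) + 1 ≤ 4 * Real.log x := by
  obtain ⟨N, hNx, hxN⟩ := exists_nat_pow_near (by linarith : (1 : ℝ) ≤ x) one_lt_two
  have hN : 1 ≤ N := by
    by_contra! h0
    interval_cases N
    norm_num at hxN
    linarith
  have hx0 : 0 < x := by linarith
  have hlow : N * Real.log 2 ≤ Real.log x := by
    rw [← Real.log_pow]; exact Real.log_le_log (by positivity) hNx
  have hup : Real.log x < (N + 1) * Real.log 2 := by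
    rw [← Nat.cast_add_one, ← Real.log_pow]; exact Real.log_lt_log hx0 hxN
  have hlog2 : Real.log 2 ≤ Real.log x := Real.log_le_log two_pos hx
  have h2lo := Real.log_two_gt_d9
  have h2hi := Real.log_two_lt_d9
  have hN' : (1 : ℝ) ≤ N := by exact_mod_cast hN
  refine ⟨N, hNx, hxN.le, ?_, ?_⟩ <;> nlinarith

lemma rpow_neg_two_thirds_le_half {x y : ℝ} (hx : 0 < x) (hxy : 4 * x ≤ y) :
    y ^ (-2 / 3 : ℝ) ≤ x ^ (-2 / 3 : ℝ) / 2 := by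
  have h4 : (4 : ℝ) ^ (-2 / 3 : ℝ) ≤ 1 / 2 := calc
    (4 : ℝ) ^ (-2 / 3 : ℝ) ≤ (4 : ℝ) ^ (-1 / 2 : ℝ) :=
      Real.rpow_le_rpow_of_exponent_le (by norm_num) (by norm_num)
    _ = 1 / 2 := by
      rw [show (4 : ℝ) = 2 ^ (2 : ℝ) by norm_num, ← Real.rpow_mul zero_le_two]
      norm_num
  calc y ^ (-2 / 3 : ℝ) ≤ (4 * x) ^ (-2 / 3 : ℝ) :=
        Real.rpow_le_rpow_of_nonpos (by positivity) hxy (by norm_num)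
    _ = (4 : ℝ) ^ (-2 / 3 : ℝ) * x ^ (-2 / 3 : ℝ) := Real.mul_rpow (by norm_num) hx.le
    _ ≤ x ^ (-2 / 3 : ℝ) / 2 := by nlinarith [Real.rpow_nonneg hx.le (-2 / 3 : ℝ)]

/-- The ratio `2 ^ (-2/3)` of consecutive terms is at most `3/4`, since its cube is `1/4`. -/
lemma sum_two_pow_mul_rpow_neg_two_thirds_le {κ : ℝ} (hκ : 0 < κ) (M : ℕ) :
    ∑ j ∈ Finset.range M, (2 ^ j * κ) ^ (-2 / 3 : ℝ) ≤ 4 * κ ^ (-2 / 3 : ℝ) := by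
  set r : ℝ := 2 ^ (-2 / 3 : ℝ)
  have hr0 : 0 ≤ r := Real.rpow_nonneg zero_le_two _
  have hr : r ≤ 3 / 4 := by
    refine le_of_pow_le_pow_left₀ three_ne_zero (by norm_num) ?_
    rw [← Real.rpow_mul_natCast zero_le_two]
    norm_num
  have hterm (j : ℕ) : (2 ^ j * κ) ^ (-2 / 3 : ℝ) = r ^ j * κ ^ (-2 / 3 : ℝ) := by
    rw [Real.mul_rpow (by positivity) hκ.le, ← Real.rpow_natCast_mul zero_le_two,
      mul_comm (j : ℝ), Real.rpow_mul_natCast zero_le_two]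
  have hgeom : ∑ j ∈ Finset.range M, r ^ j ≤ 4 := calc
    ∑ j ∈ Finset.range M, r ^ j ≤ r ^ 0 / (1 - r) := by
      rw [Finset.range_eq_Ico]; exact geom_sum_Ico_le_of_lt_one hr0 (by linarith)
    _ ≤ 4 := by rw [pow_zero, div_le_iff₀ (by linarith)]; linarith
  simp_rw [hterm, ← Finset.sum_mul]
  exact mul_le_mul_of_nonneg_right hgeom (Real.rpow_nonneg hκ.le _)

section Ranges

variable {d : ℕ} {L κ0 : ℝ} {t : (Fin d → ℤ) → ℝ}

lemma shellSum_inertial_bounds (hL : 0 ≤ L) (h : IsTracerSpectrum d t) {κ κ' A B : ℝ}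
    (hκ : 0 < κ) (hκκ' : 4 * κ ≤ κ') (hA : 0 ≤ A) (hB : 0 ≤ B)
    (hshell : ∀ k, κ ≤ k → k ≤ κ' →
      A * k ^ (-2 / 3 : ℝ) ≤ shellSum d L κ0 t k (2 * k) ∧
      shellSum d L κ0 t k (2 * k) ≤ B * k ^ (-2 / 3 : ℝ)) :
    A * (κ ^ (-2 / 3 : ℝ) - κ' ^ (-2 / 3 : ℝ)) ≤ shellSum d L κ0 t κ κ' ∧
      shellSum d L κ0 t κ κ' ≤ 8 * B * (κ ^ (-2 / 3 : ℝ) - κ' ^ (-2 / 3 : ℝ)) := by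
  have hhalf := rpow_neg_two_thirds_le_half hκ hκκ'
  have hκ'pos : 0 ≤ κ' ^ (-2 / 3 : ℝ) := Real.rpow_nonneg (by linarith) _
  obtain ⟨N, hNlow, hNup, -, -⟩ :=
    exists_dyadic_count (x := κ' / κ) (by rw [le_div_iff₀ hκ]; linarith)
  rw [le_div_iff₀ hκ] at hNlow
  rw [div_le_iff₀ hκ] at hNup
  constructor
  · calc A * (κ ^ (-2 / 3 : ℝ) - κ' ^ (-2 / 3 : ℝ)) ≤ A * κ ^ (-2 / 3 : ℝ) := by
          nlinarith
      _ ≤ shellSum d L κ0 t κ (2 * κ) := (hshell κ le_rfl (by linarith)).1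
      _ ≤ shellSum d L κ0 t κ κ' := shellSum_mono hL h le_rfl (by linarith)
  · calc shellSum d L κ0 t κ κ'
        ≤ ∑ j ∈ Finset.range (N + 1), shellSum d L κ0 t (2 ^ j * κ) (2 * (2 ^ j * κ)) :=
          shellSum_le_sum_dyadic hL h hκ.le hNup
      _ ≤ ∑ j ∈ Finset.range (N + 1), B * (2 ^ j * κ) ^ (-2 / 3 : ℝ) := by
          refine Finset.sum_le_sum fun j hj => ?_
          obtain ⟨h1, h2⟩ :=
            two_pow_mul_mem_Icc hκ.le hNlow (Nat.lt_succ_iff.mp (Finset.mem_range.mp hj))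
          exact (hshell _ h1 h2).2
      _ ≤ B * (4 * κ ^ (-2 / 3 : ℝ)) := by
          rw [← Finset.mul_sum]
          exact mul_le_mul_of_nonneg_left (sum_two_pow_mul_rpow_neg_two_thirds_le hκ _) hB
      _ ≤ 8 * B * (κ ^ (-2 / 3 : ℝ) - κ' ^ (-2 / 3 : ℝ)) := by nlinarith

lemma shellSum_viscous_convective_bounds (hL : 0 ≤ L) (h : IsTracerSpectrum d t)
    {κ κ' A B : ℝ}
    (hκ : 0 < κ) (hκκ' : 2 * κ ≤ κ') (hA : 0 ≤ A) (hB : 0 ≤ B)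
    (hshell : ∀ k, κ ≤ k → k ≤ κ' →
      A ≤ shellSum d L κ0 t k (2 * k) ∧ shellSum d L κ0 t k (2 * k) ≤ B) :
    A / 2 * Real.log (κ' / κ) ≤ shellSum d L κ0 t κ κ' ∧
      shellSum d L κ0 t κ κ' ≤ 4 * B * Real.log (κ' / κ) := by
  obtain ⟨N, hNlow, hNup, hlogN, hNlog⟩ :=
    exists_dyadic_count (x := κ' / κ) (by rw [le_div_iff₀ hκ]; linarith)
  rw [le_div_iff₀ hκ] at hNlow
  rw [div_le_iff₀ hκ] at hNup
  constructor
  · calc A / 2 * Real.log (κ' / κ) ≤ ∑ _j ∈ Finset.range N, A := by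
          rw [Finset.sum_const, Finset.card_range, nsmul_eq_mul]; nlinarith
      _ ≤ ∑ j ∈ Finset.range N, shellSum d L κ0 t (2 ^ j * κ) (2 * (2 ^ j * κ)) := by
          refine Finset.sum_le_sum fun j hj => ?_
          obtain ⟨h1, h2⟩ := two_pow_mul_mem_Icc hκ.le hNlow (Finset.mem_range.mp hj).le
          exact (hshell _ h1 h2).1
      _ ≤ shellSum d L κ0 t κ κ' := sum_dyadic_le_shellSum hL h hκ.le hNlow
  · calc shellSum d L κ0 t κ κ'
        ≤ ∑ j ∈ Finset.range (N + 1), shellSum d L κ0 t (2 ^ j * κ) (2 * (2 ^ j * κ)) :=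
          shellSum_le_sum_dyadic hL h hκ.le hNup
      _ ≤ ∑ _j ∈ Finset.range (N + 1), B := by
          refine Finset.sum_le_sum fun j hj => ?_
          obtain ⟨h1, h2⟩ :=
            two_pow_mul_mem_Icc hκ.le hNlow (Nat.lt_succ_iff.mp (Finset.mem_range.mp hj))
          exact (hshell _ h1 h2).2
      _ ≤ 4 * B * Real.log (κ' / κ) := by
          rw [Finset.sum_const, Finset.card_range, nsmul_eq_mul]; push_cast; nlinarith

end Ranges

section Scaling

variable {μ ν ε : ℝ}

lemma batchelor_eq_sqrt_schmidt_mul_kolmogorov (hμ : 0 < μ) (hν : 0 < ν) (hε : 0 < ε) :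
    (ε / (ν * μ ^ 2)) ^ (1 / 4 : ℝ) = √(ν / μ) * (ε / ν ^ 3) ^ (1 / 4 : ℝ) := by
  have hsqrt : √(ν / μ) = ((ν / μ) ^ 2) ^ (1 / 4 : ℝ) := by
    rw [Real.sqrt_eq_rpow, ← Real.rpow_natCast, ← Real.rpow_mul (by positivity)]
    norm_num
  rw [hsqrt, ← Real.mul_rpow (by positivity) (by positivity)]
  congr 1
  field_simp

lemma batchelor_rpow_neg_four_thirds_mul_schmidt (hμ : 0 < μ) (hν : 0 < ν) (hε : 0 < ε) :
    ((ε / (ν * μ ^ 2)) ^ (1 / 4 : ℝ)) ^ (-4 / 3 : ℝ) * (ν / μ) ^ (-1 / 3 : ℝ)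
      = μ * ε ^ (-1 / 3 : ℝ) := by
  rw [← Real.rpow_mul (by positivity), show (1 / 4 * (-4 / 3) : ℝ) = -1 / 3 by norm_num,
    ← Real.mul_rpow (by positivity) (by positivity),
    show ε / (ν * μ ^ 2) * (ν / μ) = ε / μ ^ 3 by field_simp,
    Real.div_rpow hε.le (by positivity), ← Real.rpow_natCast μ 3, ← Real.rpow_mul hμ.le,
    show ((3 : ℕ) * (-1 / 3) : ℝ) = -1 by norm_num, Real.rpow_neg_one, div_inv_eq_mul, mul_comm]

lemma batchelor_rpow_neg_two (hμ : 0 < μ) (hν : 0 < ν) (hε : 0 < ε) :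
    ((ε / (ν * μ ^ 2)) ^ (1 / 4 : ℝ)) ^ (-2 : ℝ) = μ * (ν / ε) ^ (1 / 2 : ℝ) := by
  rw [← Real.rpow_mul (by positivity), show (1 / 4 * -2 : ℝ) = -(1 / 2) by norm_num,
    Real.rpow_neg (by positivity), ← Real.inv_rpow (by positivity),
    show (ε / (ν * μ ^ 2))⁻¹ = μ ^ 2 * (ν / ε) by field_simp,
    Real.mul_rpow (by positivity) (by positivity), ← Real.rpow_natCast μ 2,
    ← Real.rpow_mul hμ.le, show ((2 : ℕ) * (1 / 2) : ℝ) = 1 by norm_num, Real.rpow_one]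

end Scaling

section Dissipation

variable {d : ℕ} {L κ0 μ : ℝ} {t : (Fin d → ℤ) → ℝ}

lemma chiRate_pos (hL : 0 < L) (hμ : 0 < μ) (hκ0 : 0 < κ0) (h : IsTracerSpectrum d t) :
    0 < chiRate d L κ0 μ t := by
  have := h.tsum_knorm_sq_mul_pos
  unfold chiRate
  positivity

lemma kThetaSq_eq_chiRate_div (hL : 0 < L) (hμ : 0 < μ) (hκ0 : 0 < κ0)
    (h : IsTracerSpectrum d t) :
    kThetaSq d κ0 t = chiRate d L κ0 μ t / (μ * shellSumTop d L κ0 t κ0) := by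
  rw [shellSumTop_self hκ0 h, kThetaSq, chiRate, ← mul_assoc, mul_assoc _ (κ0 ^ 2)]
  exact (mul_div_mul_left _ _ (by positivity)).symm

end Dissipation

lemma le_div_and_div_le_of_sandwich {I V T₁ T₂ T a₁ a₂ b₁ b₂ c : ℝ}
    (hI : 0 ≤ I) (hV : 0 < V) (ha₁ : 0 < a₁) (ha₂ : 0 < a₂) (hb₁ : 0 ≤ b₁) (hc : 0 < c)
    (h₁ : a₁ * I ≤ T₁ ∧ T₁ ≤ b₁ * I) (h₂ : a₂ * V ≤ T₂ ∧ T₂ ≤ b₂ * V)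
    (hT : T₁ + T₂ ≤ T) (hTc : T ≤ c * (T₁ + T₂)) :
    1 / (c * (b₁ + b₂)) ≤ (I + V) / T ∧ (I + V) / T ≤ 1 / min a₁ a₂ := by
  have hm : 0 < min a₁ a₂ := lt_min ha₁ ha₂
  have hmin : min a₁ a₂ * (I + V) ≤ T₁ + T₂ := by
    nlinarith [min_le_left a₁ a₂, min_le_right a₁ a₂]
  have hb₂ : a₂ ≤ b₂ := le_of_mul_le_mul_right (h₂.1.trans h₂.2) hV
  have hT0 : 0 < T := by nlinarith
  have hK : T₁ + T₂ ≤ (b₁ + b₂) * (I + V) := by nlinarith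
  constructor
  · rw [div_le_div_iff₀ (by nlinarith) hT0]
    nlinarith [mul_le_mul_of_nonneg_left hK hc.le]
  · rw [div_le_div_iff₀ hT0 hm]
    nlinarith

/-- Theorem 6.1 (first part): 3D, large Schmidt number. -/
theorem tracer_3D_large_Schmidt
    (c1 c2 c3 c4 c5 : ℝ)
    (hc1 : 0 < c1) (hc2 : 0 < c2) (hc3 : 0 < c3) (hc4 : 0 < c4) (hc5 : 0 < c5) :
    ∃ c C : ℝ, 0 < c ∧ 0 < C ∧
      ∀ (L μ ν ε κg κ0 Sc κε κβ' χ a b : ℝ) (t : (Fin 3 → ℤ) → ℝ),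
        0 < L → 0 < μ → 0 < ν → 0 < ε →
        IsTracerSpectrum 3 t →
        κ0 = 2 * π / L →
        Sc = ν / μ →
        16 ≤ Sc →
        κε = (ε / ν ^ 3) ^ (1 / 4 : ℝ) →
        κβ' = (ε / (ν * μ ^ 2)) ^ (1 / 4 : ℝ) →
        χ = chiRate 3 L κ0 μ t →
        a = κβ' ^ (-4 / 3 : ℝ) * Sc ^ (-1 / 3 : ℝ)
              * (κg ^ (-2 / 3 : ℝ) - κε ^ (-2 / 3 : ℝ)) →
        b = κβ' ^ (-2 : ℝ) * Real.log Sc →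
        κ0 ≤ κg → 4 * κg ≤ κε →
        (∀ κ, κg ≤ κ → κ ≤ κε →
          c1 * χ * ε ^ (-1 / 3 : ℝ) * κ ^ (-2 / 3 : ℝ) ≤ shellSum 3 L κ0 t κ (2 * κ) ∧
          shellSum 3 L κ0 t κ (2 * κ) ≤ c2 * χ * ε ^ (-1 / 3 : ℝ) * κ ^ (-2 / 3 : ℝ)) →
        (∀ κ, κε ≤ κ → κ ≤ κβ' →
          c3 * χ * (ν / ε) ^ (1 / 2 : ℝ) ≤ shellSum 3 L κ0 t κ (2 * κ) ∧
          shellSum 3 L κ0 t κ (2 * κ) ≤ c4 * χ * (ν / ε) ^ (1 / 2 : ℝ)) →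
        shellSumTop 3 L κ0 t κ0 ≤ c5 * shellSum 3 L κ0 t κg κβ' →
        c ≤ kThetaSq 3 κ0 t * (a + b) ∧ kThetaSq 3 κ0 t * (a + b) ≤ C := by
  refine ⟨1 / (c5 * (8 * c2 + 2 * c4)), 1 / min c1 (c3 / 4), by positivity, by positivity, ?_⟩
  intro L μ ν ε κg κ0 Sc κε κβ' χ a b t hL hμ hν hε ht hκ0 hSc hSc16 hκε hκβ' hχ ha hb
    hκ0g hgε hinert hvisc htop
  have hκ0pos : 0 < κ0 := hκ0 ▸ by positivity
  have hκg : 0 < κg := hκ0pos.trans_le hκ0g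
  have hκεpos : 0 < κε := hκε ▸ by positivity
  have hχpos : 0 < χ := hχ ▸ chiRate_pos hL hμ hκ0pos ht
  have hβε : κβ' = √Sc * κε := by
    rw [hκβ', hκε, hSc, batchelor_eq_sqrt_schmidt_mul_kolmogorov hμ hν hε]
  have hεβ : 2 * κε ≤ κβ' := by
    rw [hβε]; nlinarith [Real.le_sqrt_of_sq_le (by linarith : (2 : ℝ) ^ 2 ≤ Sc)]
  have hlog : Real.log (κβ' / κε) = Real.log Sc / 2 := by
    rw [hβε, mul_div_cancel_right₀ _ hκεpos.ne', Real.log_sqrt (by linarith)]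
  have hab : a + b = μ * (ε ^ (-1 / 3 : ℝ) * (κg ^ (-2 / 3 : ℝ) - κε ^ (-2 / 3 : ℝ))
      + (ν / ε) ^ (1 / 2 : ℝ) * Real.log Sc) := by
    rw [ha, hb, hκβ', hSc, batchelor_rpow_neg_four_thirds_mul_schmidt hμ hν hε,
      batchelor_rpow_neg_two hμ hν hε]
    ring
  have hinert' :=
    shellSum_inertial_bounds hL.le ht hκg hgε (by positivity) (by positivity) hinert
  have hvisc' :=
    shellSum_viscous_convective_bounds hL.le ht hκεpos hεβ (by positivity) (by positivity) hvisc
  have hsplit := shellSum_add (L := L) (κ0 := κ0) ht (by linarith : κg ≤ κε)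
    (by linarith : κε ≤ κβ')
  rw [hlog] at hvisc'
  rw [hsplit] at htop
  rw [kThetaSq_eq_chiRate_div hL hμ hκ0pos ht, ← hχ, hab, div_mul_eq_mul_div, mul_left_comm,
    mul_div_mul_left _ _ hμ.ne', mul_add χ]
  have hI : 0 ≤ ε ^ (-1 / 3 : ℝ) * (κg ^ (-2 / 3 : ℝ) - κε ^ (-2 / 3 : ℝ)) :=
    mul_nonneg (by positivity)
      (sub_nonneg.2 (Real.rpow_le_rpow_of_nonpos hκg (by linarith) (by norm_num)))
  have hV : 0 < (ν / ε) ^ (1 / 2 : ℝ) * Real.log Sc :=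
    mul_pos (by positivity) (Real.log_pos (by linarith))
  refine le_div_and_div_le_of_sandwich (mul_nonneg hχpos.le hI) (mul_pos hχpos hV) hc1
    (by positivity) (by positivity) hc5 ?_ ?_ (hsplit ▸ shellSum_le_shellSumTop hL.le ht hκ0g)
    htop <;> constructor <;> linarith
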